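/- arXiv:2406.19410 — 3 statements merged into one kernel-verified Lean document; each statement's English description precedes it below -/
import Mathlib

section
/- Fix λ ∈ ℝ. The function u(x) = cas(λx) is the unique C^∞ function u : ℝ → ℝ satisfying the differential-reflection problem (d/dx)[u(−x)] = λ u(x) for all x ∈ ℝ together with the initial condition u(0) = 1. -/
open Set

/-- The cas function, `cas x = cos x - sin x`. -/
noncomputable def cas (x : ℝ) : ℝ := Real.cos x - Real.sin x

lemma hasDerivAt_cas (x : ℝ) : HasDerivAt cas (-Real.sin x - Real.cos x) x :=
  (Real.hasDerivAt_cos x).sub (Real.hasDerivAt_sin x)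

lemma hasDerivAt_cas_mul (l x : ℝ) :
    HasDerivAt (fun y : ℝ => cas (l * y)) ((-Real.sin (l * x) - Real.cos (l * x)) * l) x := by
  simpa [Function.comp_def] using (hasDerivAt_cas (l * x)).comp x ((hasDerivAt_id x).const_mul l)

lemma hasDerivAt_cas_mul_neg (l x : ℝ) :
    HasDerivAt (fun y : ℝ => cas (l * (-y))) (l * cas (l * x)) x := by
  have h1 : HasDerivAt (fun y : ℝ => l * (-y)) (-l) x := by
    simpa using ((hasDerivAt_neg x).const_mul l)
  have this : HasDerivAt (fun y : ℝ => cas (l * (-y))) ((-Real.sin (l * -x) - Real.cos (l * -x)) * -l) x :=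
    by simpa [Function.comp_def] using (hasDerivAt_cas (l * (-x))).comp x h1
  convert this using 1
  simp [cas, Real.cos_neg, Real.sin_neg, mul_comm]
  ring

/-- For fixed `λ ∈ ℝ`, the function `u x = cas (λ x)` is the unique `C^∞`
solution of the differential-reflection problem
`(d/dx)[u(-x)] = λ u(x)`, `u 0 = 1`. -/
theorem cas_unique_solution_diff_reflection (l : ℝ) :
    (ContDiff ℝ (⊤ : ℕ∞) (fun x : ℝ => cas (l * x)) ∧
      (∀ x : ℝ, deriv (fun y : ℝ => cas (l * (-y))) x = l * cas (l * x)) ∧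
      cas (l * 0) = 1) ∧
    (∀ u : ℝ → ℝ, ContDiff ℝ (⊤ : ℕ∞) u →
      (∀ x : ℝ, deriv (fun y : ℝ => u (-y)) x = l * u x) → u 0 = 1 →
      ∀ x : ℝ, u x = cas (l * x)) := by
  constructor
  · refine ⟨?_, fun x => (hasDerivAt_cas_mul_neg l x).deriv, by simp [cas]⟩
    exact (Real.contDiff_cos.sub Real.contDiff_sin).comp (contDiff_const.mul contDiff_id)
  · intro u hu h h0 x
    have hdiff : Differentiable ℝ u := hu.differentiable (by simp)
    -- the key pointwise derivative identity: u' x = -(l * u (-x))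
    have hu' : ∀ x : ℝ, deriv u x = -(l * u (-x)) := by
      intro x
      have hc : HasDerivAt (fun y : ℝ => u (-y)) (deriv u x * (-1)) (-x) := by
        have := ((hdiff (-(-x))).hasDerivAt).comp (-x) (hasDerivAt_neg (-x))
        simpa [Function.comp_def] using this
      have := h (-x)
      rw [hc.deriv] at this
      linarith
    -- set up the 2D ODE
    set v : ℝ → ℝ × ℝ → ℝ × ℝ := fun _ p => (-l * p.2, l * p.1) with hv
    have hlip : ∀ t : ℝ, LipschitzWith ‖l‖₊ (v t) := by
      intro t
      apply LipschitzWith.of_dist_le_mul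
      intro p q
      rw [Prod.dist_eq, Prod.dist_eq]
      simp only [hv, Real.dist_eq]
      rw [max_le_iff]
      constructor
      · calc |(-l * p.2) - (-l * q.2)| = |l| * |p.2 - q.2| := by
              rw [show (-l * p.2) - (-l * q.2) = l * (q.2 - p.2) by ring, abs_mul, abs_sub_comm]
        _ ≤ ‖l‖₊ * max |p.1 - q.1| |p.2 - q.2| := by
            rw [coe_nnnorm, Real.norm_eq_abs]
            exact mul_le_mul_of_nonneg_left (le_max_right _ _) (abs_nonneg _)
      · calc |(l * p.1) - (l * q.1)| = |l| * |p.1 - q.1| := by rw [← abs_mul, mul_sub]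
        _ ≤ ‖l‖₊ * max |p.1 - q.1| |p.2 - q.2| := by
            rw [coe_nnnorm, Real.norm_eq_abs]
            exact mul_le_mul_of_nonneg_left (le_max_left _ _) (abs_nonneg _)
    set f : ℝ → ℝ × ℝ := fun t => (u t, u (-t)) with hf
    set g : ℝ → ℝ × ℝ := fun t => (cas (l * t), cas (l * (-t))) with hg
    have hf' : ∀ t : ℝ, HasDerivAt f (v t (f t)) t := by
      intro t
      have h1 : HasDerivAt u (-l * u (-t)) t := by
        have := (hdiff t).hasDerivAt
        rwa [hu' t, show -(l * u (-t)) = -l * u (-t) by ring] at this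
      have h2 : HasDerivAt (fun s : ℝ => u (-s)) (l * u t) t := by
        have := ((hdiff (-t)).hasDerivAt).comp t (hasDerivAt_neg t)
        rw [hu' (-t)] at this
        simpa [Function.comp_def] using this
      exact h1.prodMk h2
    have hg' : ∀ t : ℝ, HasDerivAt g (v t (g t)) t := by
      intro t
      have h1 : HasDerivAt (fun s : ℝ => cas (l * s)) (-l * cas (l * (-t))) t := by
        have := hasDerivAt_cas_mul l t
        convert this using 1
        simp [cas, Real.cos_neg, Real.sin_neg]
        ring
      have h2 : HasDerivAt (fun s : ℝ => cas (l * (-s))) (l * cas (l * t)) t :=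
        hasDerivAt_cas_mul_neg l t
      exact h1.prodMk h2
    have heq0 : f 0 = g 0 := by simp [hf, hg, h0, cas]
    have hmem : x ∈ Ioo (-(|x| + 1)) (|x| + 1) := by
      constructor <;> [nlinarith [abs_nonneg x, neg_abs_le x]; nlinarith [le_abs_self x]]
    have h0mem : (0 : ℝ) ∈ Ioo (-(|x| + 1)) (|x| + 1) := by
      constructor <;> nlinarith [abs_nonneg x]
    have := ODE_solution_unique_of_mem_Ioo (s := fun _ => (univ : Set (ℝ × ℝ)))
      (fun t _ => (hlip t).lipschitzOnWith) h0mem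
      (fun t _ => ⟨hf' t, trivial⟩) (fun t _ => ⟨hg' t, trivial⟩) heq0 hmem
    exact congrArg Prod.fst this
end

section
/- Let λ ∈ ℝ and let u : ℝ → ℝ be a smooth solution of the difference-differential equation −u′(−x) + x(u(x) − u(−x)) = √2 λ u(x) for all x. Write u_e(x) = (u(x)+u(−x))/2 and u_o(x) = (u(x)−u(−x))/2 for the even and odd parts of u. Then u_e′(x) = √2 λ u_o(x) and u_o′(x) − 2x u_o(x) = −√2 λ u_e(x) for all x; consequently the even part satisfies the second-order ODE u_e″(x) − 2x u_e′(x) + 2λ² u_e(x) = 0. -/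
/-- If a smooth `u : ℝ → ℝ` solves `-u'(-x) + x(u(x) - u(-x)) = √2 λ u(x)`, then its even
part `u_e` and odd part `u_o` satisfy the first-order system
`u_e' = √2 λ u_o`, `u_o' - 2x u_o = -√2 λ u_e`, and consequently the even part
satisfies `u_e'' - 2x u_e' + 2λ² u_e = 0`. -/
theorem even_odd_system_of_supercharge_eq (l : ℝ) (u : ℝ → ℝ)
    (hu : ContDiff ℝ (⊤ : ℕ∞) u)
    (heq : ∀ x : ℝ, -(deriv u (-x)) + x * (u x - u (-x)) = Real.sqrt 2 * l * u x) :
    (∀ x : ℝ, deriv (fun y : ℝ => (u y + u (-y)) / 2) x =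
        Real.sqrt 2 * l * ((u x - u (-x)) / 2)) ∧
    (∀ x : ℝ, deriv (fun y : ℝ => (u y - u (-y)) / 2) x
        - 2 * x * ((u x - u (-x)) / 2) =
        -(Real.sqrt 2 * l) * ((u x + u (-x)) / 2)) ∧
    (∀ x : ℝ, deriv (deriv (fun y : ℝ => (u y + u (-y)) / 2)) x
        - 2 * x * deriv (fun y : ℝ => (u y + u (-y)) / 2) x
        + 2 * l ^ 2 * ((u x + u (-x)) / 2) = 0) := by
  have hd : Differentiable ℝ u := hu.differentiable (by simp)
  have hneg : ∀ x : ℝ, HasDerivAt (fun y : ℝ => u (-y)) (-(deriv u (-x))) x := by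
    intro x
    have h1 := ((hd (-x)).hasDerivAt).comp x (hasDerivAt_neg x)
    simpa [mul_comm, Function.comp_def] using h1
  have hE : ∀ x : ℝ, HasDerivAt (fun y : ℝ => (u y + u (-y)) / 2)
      ((deriv u x + -(deriv u (-x))) / 2) x := fun x =>
    ((hd x).hasDerivAt.add (hneg x)).div_const 2
  have hO : ∀ x : ℝ, HasDerivAt (fun y : ℝ => (u y - u (-y)) / 2)
      ((deriv u x - -(deriv u (-x))) / 2) x := fun x =>
    ((hd x).hasDerivAt.sub (hneg x)).div_const 2
  have heq' : ∀ x : ℝ, -(deriv u x) + x * (u x - u (-x)) = Real.sqrt 2 * l * u (-x) := by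
    intro x
    have h := heq (-x)
    rw [neg_neg] at h
    linear_combination h
  have hs : Real.sqrt 2 ^ 2 = 2 := Real.sq_sqrt (by norm_num)
  have part1 : ∀ x : ℝ, deriv (fun y : ℝ => (u y + u (-y)) / 2) x =
      Real.sqrt 2 * l * ((u x - u (-x)) / 2) := by
    intro x
    rw [(hE x).deriv]
    linear_combination (heq x) / 2 - (heq' x) / 2
  refine ⟨part1, ?_, ?_⟩
  · intro x
    rw [(hO x).deriv]
    linear_combination -(heq x) / 2 - (heq' x) / 2
  · intro x
    have hfun : deriv (fun y : ℝ => (u y + u (-y)) / 2)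
        = fun y : ℝ => Real.sqrt 2 * l * ((u y - u (-y)) / 2) := funext part1
    rw [hfun]
    have h2 : HasDerivAt (fun y : ℝ => Real.sqrt 2 * l * ((u y - u (-y)) / 2))
        (Real.sqrt 2 * l * ((deriv u x - -(deriv u (-x))) / 2)) x :=
      (hO x).const_mul _
    rw [h2.deriv]
    linear_combination -(Real.sqrt 2 * l / 2) * heq x + -(Real.sqrt 2 * l / 2) * heq' x
      - (l ^ 2 * (u x + u (-x)) / 2) * hs
end

section
/- For every n ∈ ℕ with n ≥ 1 and each choice of sign ±, the supersymmetric Hermite polynomial 𝓗_{±n} satisfies the difference-differential equation −𝓗_{±n}′(−x) + x(𝓗_{±n}(x) − 𝓗_{±n}(−x)) = ±2√n · 𝓗_{±n}(x) for all x ∈ ℝ. -/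
/-!
The identity is a polynomial identity. Write `𝓗 = P + c Q` with `P = H_{2n}` even,
`Q = H_{2n-1}` odd and `c = ±2√n`. Since `H_k' = 2k H_{k-1}`, the left-hand side is
`4n Q + c (2x Q - 2(2n-1) H_{2n-2})`, and the three-term recurrence turns the bracket into `P`.
So it equals `c P + 4n Q`, which is `c (P + c Q)` exactly because `c² = 4n`.
-/

/-- The physicists' Hermite polynomial, via the Rodrigues formula
`H n x = (-1)^n e^(x²) (dⁿ/dxⁿ) e^(-x²)`. -/
noncomputable def physHermite (n : ℕ) (x : ℝ) : ℝ :=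
    (-1 : ℝ) ^ n * Real.exp (x ^ 2) * iteratedDeriv n (fun y : ℝ => Real.exp (-y ^ 2)) x

/-- The supersymmetric Hermite polynomial `𝓗_{εn} = H_{2n} + ε 2√n H_{2n-1}` for `n ≥ 1`
(with sign `ε = ±1`), and `𝓗₀ = 1`. -/
noncomputable def ssHermite (ε : ℝ) (n : ℕ) (x : ℝ) : ℝ :=
    if n = 0 then 1
    else physHermite (2 * n) x + ε * (2 * Real.sqrt n) * physHermite (2 * n - 1) x

open Polynomial

section Polynomial

variable {R : Type*} [CommRing R]

variable (R) in
noncomputable def physHermitePoly : ℕ → R[X]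
  | 0 => 1
  | n + 1 => 2 * X * physHermitePoly n - derivative (physHermitePoly n)

theorem physHermitePoly_succ (n : ℕ) :
    physHermitePoly R (n + 1) = 2 * X * physHermitePoly R n - derivative (physHermitePoly R n) :=
  rfl

theorem derivative_physHermitePoly_succ (n : ℕ) :
    derivative (physHermitePoly R (n + 1)) = 2 * (n + 1 : R[X]) * physHermitePoly R n := by
  induction n with
  | zero => simp [physHermitePoly]
  | succ n ih =>
    rw [physHermitePoly_succ (n + 1), derivative_sub, derivative_mul, ih, derivative_mul,
      physHermitePoly_succ n]
    simp only [derivative_mul, derivative_ofNat, derivative_X, derivative_add,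
      derivative_natCast, derivative_one]
    push_cast
    ring

theorem physHermitePoly_succ_succ (n : ℕ) :
    physHermitePoly R (n + 2) =
      2 * X * physHermitePoly R (n + 1) - 2 * (n + 1 : R[X]) * physHermitePoly R n := by
  rw [physHermitePoly_succ (n + 1), derivative_physHermitePoly_succ]

theorem physHermitePoly_comp_neg_X (n : ℕ) :
    (physHermitePoly R n).comp (-X) = (-1) ^ n * physHermitePoly R n := by
  induction n using Nat.twoStepInduction with
  | zero => simp [physHermitePoly]
  | one => simp [physHermitePoly]
  | more n ih₀ ih₁ =>
    simp only [physHermitePoly_succ_succ, sub_comp, mul_comp, ofNat_comp, X_comp, add_comp,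
      natCast_comp, one_comp, ih₀, ih₁]
    ring

/-- For `n ≥ 1` and `c = ±2√n` this is `𝓗_{±n}`. -/
noncomputable def ssHermitePoly (c : R) (n : ℕ) : R[X] :=
  physHermitePoly R (2 * n) + C c * physHermitePoly R (2 * n - 1)

theorem ssHermitePoly_diff_diff_eq {c : R} {n : ℕ} (hn : n ≠ 0) (hc : c ^ 2 = 4 * n) :
    -(derivative (ssHermitePoly c n)).comp (-X)
        + X * (ssHermitePoly c n - (ssHermitePoly c n).comp (-X)) =
      C c * ssHermitePoly c n := by
  obtain ⟨m, rfl⟩ := Nat.exists_eq_add_one_of_ne_zero hn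
  have hidx : 2 * (m + 1) - 1 = 2 * m + 1 ∧ 2 * (m + 1) = 2 * m + 1 + 1 := by omega
  have hderiv (k : ℕ) : (derivative (physHermitePoly R (k + 1))).comp (-X) =
      2 * (k + 1 : R[X]) * (-1) ^ k * physHermitePoly R k := by
    rw [derivative_physHermitePoly_succ, mul_comp, physHermitePoly_comp_neg_X]
    simp only [mul_comp, ofNat_comp, add_comp, natCast_comp, one_comp]
    ring
  have hc' : C c ^ 2 = 4 * (m + 1 : R[X]) := by
    rw [← C_pow, hc]
    simp only [Nat.cast_add, Nat.cast_one, map_mul, map_ofNat, map_add, map_natCast, map_one]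
  rw [ssHermitePoly, hidx.1, hidx.2, derivative_add, derivative_C_mul, add_comp, add_comp,
    mul_comp, mul_comp, C_comp, physHermitePoly_comp_neg_X,
    physHermitePoly_comp_neg_X, hderiv, hderiv, physHermitePoly_succ_succ]
  simp only [pow_succ, pow_mul]
  push_cast
  linear_combination (-physHermitePoly R (2 * m + 1)) * hc'

end Polynomial

theorem iteratedDeriv_exp_neg_sq (n : ℕ) (x : ℝ) :
    iteratedDeriv n (fun y : ℝ => Real.exp (-y ^ 2)) x =
      (-1) ^ n * (physHermitePoly ℝ n).eval x * Real.exp (-x ^ 2) := by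
  induction n generalizing x with
  | zero => simp [physHermitePoly]
  | succ n ih =>
    have hgauss : HasDerivAt (fun y : ℝ => Real.exp (-y ^ 2)) (-(2 * x) * Real.exp (-x ^ 2)) x := by
      simpa [mul_comm] using ((hasDerivAt_pow 2 x).neg).exp
    have hprod : HasDerivAt (fun y => (-1) ^ n * (physHermitePoly ℝ n).eval y * Real.exp (-y ^ 2))
        ((-1) ^ n * ((derivative (physHermitePoly ℝ n)).eval x * Real.exp (-x ^ 2)
          + (physHermitePoly ℝ n).eval x * (-(2 * x) * Real.exp (-x ^ 2)))) x := by
      simpa only [mul_assoc] using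
        (((physHermitePoly ℝ n).hasDerivAt x).fun_mul hgauss).const_mul ((-1 : ℝ) ^ n)
    rw [iteratedDeriv_succ, funext ih, hprod.deriv, physHermitePoly_succ]
    simp only [eval_sub, eval_mul, eval_ofNat, eval_X]
    ring

theorem physHermite_eq_eval (n : ℕ) : physHermite n = fun x => (physHermitePoly ℝ n).eval x := by
  funext x
  rw [physHermite, iteratedDeriv_exp_neg_sq]
  have hsign : (-1 : ℝ) ^ n * (-1) ^ n = 1 := by rw [← mul_pow]; simp
  have hexp : Real.exp (x ^ 2) * Real.exp (-x ^ 2) = 1 := by rw [← Real.exp_add]; simp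
  linear_combination
    ((physHermitePoly ℝ n).eval x * Real.exp (x ^ 2) * Real.exp (-x ^ 2)) * hsign
      + (physHermitePoly ℝ n).eval x * hexp

theorem ssHermite_diff_diff_eq_general (n : ℕ) (ε : ℝ) (hε : ε = 1 ∨ ε = -1) (x : ℝ) :
    -(deriv (ssHermite ε n) (-x)) + x * (ssHermite ε n x - ssHermite ε n (-x)) =
      ε * (2 * Real.sqrt n) * ssHermite ε n x := by
  rcases eq_or_ne n 0 with rfl | hn
  · have hconst : ssHermite ε 0 = fun _ => 1 := funext fun _ => if_pos rfl
    simp [hconst]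
  have hpoly : ssHermite ε n = fun y => (ssHermitePoly (ε * (2 * Real.sqrt n)) n).eval y := by
    funext y
    simp [ssHermite, ssHermitePoly, hn, physHermite_eq_eval]
  have hc : (ε * (2 * Real.sqrt n)) ^ 2 = 4 * n := by
    have hε2 : ε ^ 2 = 1 := by rcases hε with rfl | rfl <;> norm_num
    rw [mul_pow, mul_pow, hε2, Real.sq_sqrt n.cast_nonneg]
    ring
  have hidentity := congrArg (eval x) (ssHermitePoly_diff_diff_eq hn hc)
  rw [hpoly, Polynomial.deriv]
  simpa [eval_comp] using hidentity

/-- For `n ≥ 1` and each sign `ε = ±1`, the supersymmetric Hermite polynomial satisfies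
the difference-differential equation
`-𝓗'_{εn}(-x) + x(𝓗_{εn}(x) - 𝓗_{εn}(-x)) = ε 2√n 𝓗_{εn}(x)`. -/
theorem ssHermite_diff_diff_eq (n : ℕ) (hn : 1 ≤ n) (ε : ℝ) (hε : ε = 1 ∨ ε = -1) (x : ℝ) :
    -(deriv (ssHermite ε n) (-x)) + x * (ssHermite ε n x - ssHermite ε n (-x)) =
      ε * (2 * Real.sqrt n) * ssHermite ε n x :=
  ssHermite_diff_diff_eq_general n ε hε x
end
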